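/- arXiv:1103.4564 — 2 statements merged into one kernel-verified Lean document; each statement's English description precedes it below -/
import Mathlib

section
/- For every h ∈ (0, 1/2) and every α > 0 there exist a real constant k_α^h and constants C > 0, R > ρ_h(α) such that for all ρ ≥ R one has |H_α^h(ρ) − k_α^h − c_h·ρ| ≤ C·e^{−ρ}, where c_h = 2h/√(1 − 4h²). In particular H_α^h(ρ) − c_h·ρ converges as ρ → +∞ and H_α^h(ρ) → +∞. -/
open Real Set Filter MeasureTheory

/-- Inverse hyperbolic cosine. -/
noncomputable def arcosh (x : ℝ) : ℝ := Real.log (x + Real.sqrt (x ^ 2 - 1))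

/-- The root `φ(h,α)` of the quadratic `(s² − 1) − (2hs − α)²`. -/
noncomputable def phi (h α : ℝ) : ℝ :=
  (-2 * α * h + Real.sqrt (1 - 4 * h ^ 2 + α ^ 2)) / (1 - 4 * h ^ 2)

/-- The negative root `b(h,α)` of the quadratic `(s² − 1) − (2hs − α)²`. -/
noncomputable def bb (h α : ℝ) : ℝ :=
  -(2 * h * α + Real.sqrt (1 - 4 * h ^ 2 + α ^ 2)) / (1 - 4 * h ^ 2)

/-- The radius `ρ_h(α)` of the base circle of the rotational cmc `h` surface `H_α^h`. -/
noncomputable def rho (h α : ℝ) : ℝ := _root_.arcosh (phi h α)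

/-- The derivative `u_α^h` of the profile function of `H_α^h`. -/
noncomputable def uu (h α ρ : ℝ) : ℝ :=
  (-α + 2 * h * Real.cosh ρ) /
    Real.sqrt (Real.sinh ρ ^ 2 - (-α + 2 * h * Real.cosh ρ) ^ 2)

/-- The profile function `H_α^h` of the rotational cmc `h` surfaces of Sa Earp–Toubiana. -/
noncomputable def HH (h α ρ : ℝ) : ℝ := ∫ w in rho h α..ρ, uu h α w

/-!
Write `u = N / √D` with `N = 2h cosh w - α` and `D = sinh² w - N²`. Since `φ` is a root of
`(s² - 1) - (2hs - α)²`, `D` factors as `(cosh w - φ)` times a factor bounded below by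
`(1 + α²) / φ`, and `D ≥ 0` gives `|N| ≤ sinh w`. So near `ρ_h(α)` the integrand is dominated by
a multiple of `sinh w / √(cosh w - cosh ρ_h(α))`, the derivative of `2 √(cosh w - cosh ρ_h(α))`,
and `H` is an honest integral. At infinity `u w = f (1 / cosh w)` for a function `f` smooth at `0`
with `f 0 = c_h`, hence `u - c_h = O(1 / cosh w) = O(e^{-w})`; integrating this tail gives the
expansion, with `k = H(R) - c_h R + ∫_R^∞ (u - c_h)`.
-/

open Asymptotics Topology

lemma integrableOn_sinh_div_sqrt_cosh_sub_cosh {r : ℝ} (hr : 0 ≤ r) (b : ℝ) :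
    IntegrableOn (fun w => sinh w / √(cosh w - cosh r)) (Ioc r b) := by
  have hlt : ∀ w ∈ Ioo r b, cosh r < cosh w := fun w hw => by
    rw [cosh_lt_cosh, abs_of_nonneg hr, abs_of_nonneg (hr.trans hw.1.le)]
    exact hw.1
  have hderiv : ∀ w ∈ Ioo r b,
      HasDerivAt (fun w => 2 * √(cosh w - cosh r)) (sinh w / √(cosh w - cosh r)) w := by
    intro w hw
    have hpos : cosh w - cosh r ≠ 0 := (sub_pos.2 (hlt w hw)).ne'
    refine ((((hasDerivAt_cosh w).sub_const (cosh r)).sqrt hpos).const_mul 2).congr_deriv ?_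
    rw [mul_div_assoc', mul_div_mul_left _ _ two_ne_zero]
  refine intervalIntegral.integrableOn_deriv_of_nonneg (by fun_prop) hderiv fun w hw => ?_
  have : 0 ≤ sinh w := sinh_nonneg_iff.2 (hr.trans hw.1.le)
  positivity

lemma inv_cosh_le_two_mul_exp_neg (w : ℝ) : (cosh w)⁻¹ ≤ 2 * exp (-w) := by
  have : exp w / 2 ≤ cosh w := by
    rw [cosh_eq]
    linarith [exp_pos (-w)]
  calc (cosh w)⁻¹ ≤ (exp w / 2)⁻¹ := inv_anti₀ (by positivity) this
    _ = 2 * exp (-w) := by rw [inv_div, exp_neg, div_eq_mul_inv]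

lemma tendsto_inv_cosh_atTop : Tendsto (fun w => (cosh w)⁻¹) atTop (𝓝 0) :=
  squeeze_zero (fun w => (inv_pos.2 (cosh_pos w)).le) inv_cosh_le_two_mul_exp_neg
    (by simpa using tendsto_exp_neg_atTop_nhds_zero.const_mul 2)

lemma abs_setIntegral_Ioi_le_of_abs_le_exp {g : ℝ → ℝ} {C ρ : ℝ}
    (hg : AEStronglyMeasurable g (volume.restrict (Ioi ρ)))
    (hbound : ∀ w, ρ ≤ w → |g w| ≤ C * exp (-w)) :
    IntegrableOn g (Ioi ρ) ∧ |∫ w in Ioi ρ, g w| ≤ C * exp (-ρ) := by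
  have hmajor : IntegrableOn (fun w => C * exp (-w)) (Ioi ρ) := by
    simpa [IntegrableOn] using (exp_neg_integrableOn_Ioi ρ one_pos).const_mul C
  have hae : ∀ᵐ w ∂volume.restrict (Ioi ρ), ‖g w‖ ≤ C * exp (-w) := by
    filter_upwards [ae_restrict_mem measurableSet_Ioi] with w hw
    exact hbound w hw.le
  refine ⟨hmajor.mono' hg hae, ?_⟩
  calc |∫ w in Ioi ρ, g w| ≤ ∫ w in Ioi ρ, C * exp (-w) := norm_integral_le_of_norm_le hmajor hae
    _ = C * exp (-ρ) := by rw [integral_const_mul, integral_exp_neg_Ioi]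

theorem exists_abs_sub_affine_le_of_integral {F f : ℝ → ℝ} {c C R : ℝ}
    (hF : ∀ ρ, R ≤ ρ → F ρ - F R = ∫ w in R..ρ, f w)
    (hf : AEStronglyMeasurable f (volume.restrict (Ioi R)))
    (hbound : ∀ w, R ≤ w → |f w - c| ≤ C * exp (-w)) :
    ∃ k, ∀ ρ, R ≤ ρ → |F ρ - k - c * ρ| ≤ C * exp (-ρ) := by
  have hg : ∀ ρ, R ≤ ρ → IntegrableOn (fun w => f w - c) (Ioi ρ) ∧
      |∫ w in Ioi ρ, (f w - c)| ≤ C * exp (-ρ) := fun ρ hρ =>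
    abs_setIntegral_Ioi_le_of_abs_le_exp
      ((hf.sub aestronglyMeasurable_const).mono_measure
        (Measure.restrict_mono (Ioi_subset_Ioi hρ) le_rfl))
      fun w hw => hbound w (hρ.trans hw)
  refine ⟨F R - c * R + ∫ w in Ioi R, (f w - c), fun ρ hρ => ?_⟩
  have hgR := (hg R le_rfl).1
  have hfi : IntervalIntegrable f volume R ρ := by
    simpa using ((intervalIntegrable_iff_integrableOn_Ioc_of_le hρ).2
      (hgR.mono_set Ioc_subset_Ioi_self)).add (intervalIntegrable_const (c := c))
  have hsplit := intervalIntegral.integral_Ioi_sub_Ioi hgR hρ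
  rw [intervalIntegral.integral_sub hfi intervalIntegrable_const, intervalIntegral.integral_const,
    smul_eq_mul, ← hF ρ hρ] at hsplit
  have htail : F ρ - (F R - c * R + ∫ w in Ioi R, (f w - c)) - c * ρ =
      -∫ w in Ioi ρ, (f w - c) := by
    linarith
  rw [htail, abs_neg]
  exact (hg ρ hρ).2

lemma tendsto_sub_mul_of_abs_sub_affine_le {F : ℝ → ℝ} {k c C R : ℝ}
    (hF : ∀ ρ, R ≤ ρ → |F ρ - k - c * ρ| ≤ C * exp (-ρ)) :
    Tendsto (fun ρ => F ρ - c * ρ) atTop (𝓝 k) := by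
  rw [← tendsto_sub_nhds_zero_iff]
  refine squeeze_zero_norm' ?_ (by simpa using tendsto_exp_neg_atTop_nhds_zero.const_mul C)
  filter_upwards [eventually_ge_atTop R] with ρ hρ
  rw [Real.norm_eq_abs, sub_right_comm]
  exact hF ρ hρ

noncomputable def uuSech (h α y : ℝ) : ℝ :=
  (2 * h - α * y) / √(1 - 4 * h ^ 2 + 4 * α * h * y - (1 + α ^ 2) * y ^ 2)

section Profile

variable {h α : ℝ}

lemma phi_root (hm : 0 < 1 - 4 * h ^ 2) :
    (1 - 4 * h ^ 2) * phi h α ^ 2 + 4 * α * h * phi h α = 1 + α ^ 2 := by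
  have hs : √(1 - 4 * h ^ 2 + α ^ 2) ^ 2 = 1 - 4 * h ^ 2 + α ^ 2 := Real.sq_sqrt (by positivity)
  unfold phi
  field_simp
  linear_combination hs

lemma one_le_phi (hm : 0 < 1 - 4 * h ^ 2) : 1 ≤ phi h α := by
  have key : (1 - 4 * h ^ 2) + 2 * α * h ≤ √(1 - 4 * h ^ 2 + α ^ 2) := by
    apply Real.le_sqrt_of_sq_le
    nlinarith [mul_nonneg hm.le (sq_nonneg (α - 2 * h))]
  rw [phi, le_div_iff₀ hm]
  linarith

lemma rho_nonneg (hm : 0 < 1 - 4 * h ^ 2) : 0 ≤ rho h α :=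
  Real.arcosh_nonneg (one_le_phi hm)

lemma cosh_rho (hm : 0 < 1 - 4 * h ^ 2) : cosh (rho h α) = phi h α :=
  Real.cosh_arcosh (one_le_phi hm)

lemma phi_lt_cosh (hm : 0 < 1 - 4 * h ^ 2) {w : ℝ} (hw : rho h α < w) :
    phi h α < cosh w := by
  have h0 := rho_nonneg (α := α) hm
  rw [← cosh_rho hm, cosh_lt_cosh, abs_of_nonneg h0, abs_of_nonneg (h0.trans hw.le)]
  exact hw

lemma sinh_sq_sub_sq_eq (hm : 0 < 1 - 4 * h ^ 2) (w : ℝ) :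
    sinh w ^ 2 - (-α + 2 * h * cosh w) ^ 2 =
      (cosh w - phi h α) * ((1 - 4 * h ^ 2) * (cosh w + phi h α) + 4 * α * h) := by
  linear_combination sinh_sq w + phi_root (α := α) hm

lemma sinh_sq_sub_sq_ge (hm : 0 < 1 - 4 * h ^ 2) {w : ℝ} (hw : rho h α < w) :
    (1 + α ^ 2) / phi h α * (cosh w - phi h α) ≤
      sinh w ^ 2 - (-α + 2 * h * cosh w) ^ 2 := by
  have hφ := one_le_phi (α := α) hm
  have hroot : (1 + α ^ 2) / phi h α = (1 - 4 * h ^ 2) * phi h α + 4 * α * h := by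
    rw [div_eq_iff (by positivity), ← phi_root hm]
    ring
  rw [sinh_sq_sub_sq_eq hm, hroot, mul_comm]
  have hx := phi_lt_cosh hm hw
  gcongr
  nlinarith [one_le_cosh w]

lemma measurable_uu : Measurable (uu h α) := by
  unfold uu
  fun_prop

lemma abs_uu_le (hm : 0 < 1 - 4 * h ^ 2) {w : ℝ} (hw : rho h α < w) :
    |uu h α w| ≤ sinh w / √(cosh w - phi h α) / √((1 + α ^ 2) / phi h α) := by
  have hφ := one_le_phi (α := α) hm
  have hκ : 0 < (1 + α ^ 2) / phi h α := by positivity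
  have hx : 0 < cosh w - phi h α := sub_pos.2 (phi_lt_cosh hm hw)
  have hD := sinh_sq_sub_sq_ge hm hw
  have hsinh : 0 ≤ sinh w := sinh_nonneg_iff.2 ((rho_nonneg hm).trans hw.le)
  have hN : |-α + 2 * h * cosh w| ≤ sinh w :=
    abs_le_of_sq_le_sq (by nlinarith [mul_pos hκ hx]) hsinh
  rw [uu, abs_div, abs_of_nonneg (Real.sqrt_nonneg _), div_div, ← Real.sqrt_mul hx.le,
    mul_comm (cosh w - _)]
  gcongr

lemma intervalIntegrable_uu (hm : 0 < 1 - 4 * h ^ 2) {b : ℝ} (hb : rho h α ≤ b) :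
    IntervalIntegrable (uu h α) volume (rho h α) b := by
  rw [intervalIntegrable_iff_integrableOn_Ioc_of_le hb]
  have hmajor := (integrableOn_sinh_div_sqrt_cosh_sub_cosh (rho_nonneg (α := α) hm) b).div_const
    (√((1 + α ^ 2) / phi h α))
  rw [cosh_rho hm] at hmajor
  refine hmajor.mono' measurable_uu.aestronglyMeasurable ?_
  filter_upwards [ae_restrict_mem measurableSet_Ioc] with w hw
  exact abs_uu_le hm hw.1

lemma HH_sub_HH (hm : 0 < 1 - 4 * h ^ 2) {a b : ℝ} (ha : rho h α ≤ a) (hb : rho h α ≤ b) :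
    HH h α b - HH h α a = ∫ w in a..b, uu h α w :=
  intervalIntegral.integral_interval_sub_left (intervalIntegrable_uu hm hb)
    (intervalIntegrable_uu hm ha)

lemma uu_eq_uuSech (w : ℝ) : uu h α w = uuSech h α (cosh w)⁻¹ := by
  have hx := cosh_pos w
  have hD : sinh w ^ 2 - (-α + 2 * h * cosh w) ^ 2 = cosh w ^ 2 *
      (1 - 4 * h ^ 2 + 4 * α * h * (cosh w)⁻¹ - (1 + α ^ 2) * ((cosh w)⁻¹) ^ 2) := by
    rw [sinh_sq]
    field_simp
    ring
  have hN : -α + 2 * h * cosh w = cosh w * (2 * h - α * (cosh w)⁻¹) := by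
    field_simp
    ring
  rw [uu, uuSech, hD, hN, Real.sqrt_mul (sq_nonneg _), Real.sqrt_sq hx.le,
    mul_div_mul_left _ _ hx.ne']

lemma uuSech_zero : uuSech h α 0 = 2 * h / √(1 - 4 * h ^ 2) := by
  simp [uuSech]

lemma differentiableAt_uuSech_zero (hm : 0 < 1 - 4 * h ^ 2) :
    DifferentiableAt ℝ (uuSech h α) 0 := by
  have hq : (1 - 4 * h ^ 2 + 4 * α * h * 0 - (1 + α ^ 2) * 0 ^ 2) ≠ 0 := by
    simpa using hm.ne'
  refine (by fun_prop : DifferentiableAt ℝ (fun y => 2 * h - α * y) 0).div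
    ((by fun_prop : DifferentiableAt ℝ
      (fun y => 1 - 4 * h ^ 2 + 4 * α * h * y - (1 + α ^ 2) * y ^ 2) 0).sqrt hq) ?_
  simpa using (Real.sqrt_pos.2 hm).ne'

lemma uu_sub_isBigO (hm : 0 < 1 - 4 * h ^ 2) :
    (fun w => uu h α w - 2 * h / √(1 - 4 * h ^ 2)) =O[atTop] fun w => exp (-w) := by
  have hsech := ((differentiableAt_uuSech_zero (α := α) hm).isBigO_sub).comp_tendsto
    tendsto_inv_cosh_atTop
  simp only [Function.comp_def, sub_zero, uuSech_zero, ← uu_eq_uuSech] at hsech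
  refine hsech.trans (IsBigO.of_bound 2 (Eventually.of_forall fun w => ?_))
  rw [norm_inv, Real.norm_of_nonneg (cosh_pos w).le, Real.norm_of_nonneg (exp_pos _).le]
  exact inv_cosh_le_two_mul_exp_neg w

end Profile

theorem stmt_8_general (h α : ℝ) (hh : h ∈ Set.Ioo (0 : ℝ) (1 / 2)) :
    ∃ k C R : ℝ, 0 < C ∧ rho h α < R ∧
      (∀ ρ : ℝ, R ≤ ρ →
        |HH h α ρ - k - 2 * h / Real.sqrt (1 - 4 * h ^ 2) * ρ| ≤
          C * Real.exp (-ρ)) ∧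
      Filter.Tendsto (fun ρ => HH h α ρ - 2 * h / Real.sqrt (1 - 4 * h ^ 2) * ρ)
        Filter.atTop (nhds k) ∧
      Filter.Tendsto (HH h α) Filter.atTop Filter.atTop := by
  have hm : 0 < 1 - 4 * h ^ 2 := by nlinarith [hh.1, hh.2]
  have hc : 0 < 2 * h / √(1 - 4 * h ^ 2) := by have := hh.1; positivity
  obtain ⟨C, hC, hO⟩ := (uu_sub_isBigO (α := α) hm).exists_pos
  obtain ⟨R₀, hR₀⟩ := eventually_atTop.1 hO.bound
  set R := max R₀ (rho h α + 1)
  have hbound : ∀ w, R ≤ w → |uu h α w - 2 * h / √(1 - 4 * h ^ 2)| ≤ C * exp (-w) :=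
    fun w hw => by simpa using hR₀ w ((le_max_left _ _).trans hw)
  have hρR : rho h α < R := by linarith [le_max_right R₀ (rho h α + 1)]
  obtain ⟨k, hk⟩ := exists_abs_sub_affine_le_of_integral
    (fun ρ hρ => HH_sub_HH hm hρR.le (hρR.le.trans hρ)) measurable_uu.aestronglyMeasurable hbound
  have hlim := tendsto_sub_mul_of_abs_sub_affine_le hk
  refine ⟨k, C, R, hC, hρR, hk, hlim, ?_⟩
  simpa using hlim.add_atTop (tendsto_id.const_mul_atTop hc)

/-- asymptotic expansion H_α^h(ρ) = k_α^h + c_h·ρ + O(e^{−ρ}), with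
c_h = 2h/√(1 − 4h²); in particular H_α^h(ρ) − c_h·ρ converges and H_α^h → +∞. -/
theorem stmt_8 (h α : ℝ) (hh : h ∈ Set.Ioo (0 : ℝ) (1 / 2)) (hα : 0 < α) :
    ∃ k C R : ℝ, 0 < C ∧ rho h α < R ∧
      (∀ ρ : ℝ, R ≤ ρ →
        |HH h α ρ - k - 2 * h / Real.sqrt (1 - 4 * h ^ 2) * ρ| ≤
          C * Real.exp (-ρ)) ∧
      Filter.Tendsto (fun ρ => HH h α ρ - 2 * h / Real.sqrt (1 - 4 * h ^ 2) * ρ)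
        Filter.atTop (nhds k) ∧
      Filter.Tendsto (HH h α) Filter.atTop Filter.atTop :=
  stmt_8_general h α hh
end

section
/- For every h ∈ (0, 1/2) and every z > 0, the derivative of the map α ↦ ũ_α^h(z) at α = 2h equals −(1/z)·√(z + 2)/( (1 − 4h²)·( z + 2/(1 − 4h²) )^{3/2} ). Moreover this function of z is not integrable near 0: the integral ∫_0^1 (1/z)·√(z + 2)/( (1 − 4h²)·( z + 2/(1 − 4h²) )^{3/2} ) dz diverges to +∞. -/
open Real Set Filter MeasureTheory

/-- The integrand ũ_α^h(z) of H_α^h after the change of variable z = cosh ρ − φ. -/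
noncomputable def utilde (h α z : ℝ) : ℝ :=
  (-α + 2 * h * (z + phi h α)) /
    (Real.sqrt z * Real.sqrt (z + phi h α - bb h α) *
      Real.sqrt ((z + phi h α) ^ 2 - 1))

/-! At `α = 2h` the root `φ` is stationary: `φ = 1` and `∂_α φ = 0`, while
`φ − b = 2√(1 − 4h² + α²)/(1 − 4h²)` has derivative `4h/(1 − 4h²)`. Only the numerator and the
factor `√(z + φ − b)` of `ũ` therefore contribute, and the quotient rule collapses to the stated
formula through `z + 2 = (1 − 4h²)(z + 2/(1 − 4h²)) + 4h²z`. The factor multiplying `1/z` is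
bounded below by a positive constant on `(0, 1]`, so the integral over `(ε, 1)` dominates a
multiple of `log (1/ε)`. -/

open Topology

section NonIntegrable

variable {g : ℝ → ℝ} {m b : ℝ}

theorem not_integrableOn_Ioo_one_div_mul_of_le (hm : 0 < m) (hb : 0 < b)
    (hle : ∀ z ∈ Ioo 0 b, m ≤ g z) : ¬ IntegrableOn (fun z => 1 / z * g z) (Ioo 0 b) := by
  intro hg
  have hmz : IntegrableOn (fun z : ℝ => m * z⁻¹) (Ioo 0 b) := by
    refine hg.mono' ((continuousOn_const.mul (continuousOn_inv₀.mono fun z hz => hz.1.ne')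
      ).aestronglyMeasurable measurableSet_Ioo) ((ae_restrict_iff' measurableSet_Ioo).2
      (ae_of_all _ fun z hz => ?_))
    rw [norm_of_nonneg (by have := hz.1; positivity), one_div, mul_comm]
    exact mul_le_mul_of_nonneg_left (hle z hz) (inv_nonneg.2 hz.1.le)
  have hinv : IntervalIntegrable (fun z : ℝ => z⁻¹) volume 0 b := by
    rw [intervalIntegrable_iff_integrableOn_Ioo_of_le hb.le, IntegrableOn]
    simpa [← mul_assoc, hm.ne'] using hmz.const_mul m⁻¹
  simp [intervalIntegrable_inv_iff, hb.ne, hb.le] at hinv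

theorem tendsto_intervalIntegral_one_div_mul_of_le (hm : 0 < m) (hb : 0 < b)
    (hg : ContinuousOn g (Ioc 0 b)) (hle : ∀ z ∈ Ioc 0 b, m ≤ g z) :
    Tendsto (fun ε => ∫ z in ε..b, 1 / z * g z) (𝓝[>] 0) atTop := by
  have hlog : Tendsto (fun ε => m * log (b * ε⁻¹)) (𝓝[>] 0) atTop :=
    (tendsto_log_atTop.comp (tendsto_inv_nhdsGT_zero.const_mul_atTop hb)).const_mul_atTop hm
  refine tendsto_atTop_mono' _ ?_ hlog
  filter_upwards [Ioo_mem_nhdsGT hb] with ε hε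
  have hsub : Icc ε b ⊆ Ioc 0 b := Icc_subset_Ioc_iff hε.2.le |>.2 ⟨hε.1, le_rfl⟩
  have hinv : ContinuousOn (fun z : ℝ => 1 / z) (Icc ε b) :=
    continuousOn_const.div continuousOn_id fun z hz => (hε.1.trans_le hz.1).ne'
  calc m * log (b * ε⁻¹) = ∫ z in ε..b, 1 / z * m := by
        have h0 : (0 : ℝ) ∉ uIcc ε b := by
          rw [uIcc_of_le hε.2.le]
          exact fun h0 => hε.1.not_ge h0.1
        rw [intervalIntegral.integral_mul_const, integral_one_div h0, mul_comm, div_eq_mul_inv]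
    _ ≤ ∫ z in ε..b, 1 / z * g z := by
        refine intervalIntegral.integral_mono_on hε.2.le
          (ContinuousOn.intervalIntegrable_of_Icc hε.2.le (hinv.mul continuousOn_const))
          (ContinuousOn.intervalIntegrable_of_Icc hε.2.le (hinv.mul (hg.mono hsub)))
          fun z hz => ?_
        have hz0 := hε.1.trans_le hz.1
        exact mul_le_mul_of_nonneg_left (hle z (hsub hz)) (by positivity)

end NonIntegrable

section Weight

variable {k : ℝ}

theorem continuousOn_sqrt_add_two_div_mul_rpow (hk : 0 < k) :
    ContinuousOn (fun z => √(z + 2) / (k * (z + 2 / k) ^ ((3 : ℝ) / 2))) (Ioi 0) := by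
  refine ContinuousOn.div (by fun_prop) (by fun_prop (disch := norm_num)) fun z hz => ?_
  have : 0 < z + 2 / k := by have := hz.out; positivity
  positivity

theorem sqrt_two_div_le_sqrt_add_two_div_mul_rpow (hk : 0 < k) {z : ℝ} (hz : z ∈ Icc 0 1) :
    √2 / (k * (1 + 2 / k) ^ ((3 : ℝ) / 2)) ≤
      √(z + 2) / (k * (z + 2 / k) ^ ((3 : ℝ) / 2)) := by
  have hzk : 0 < z + 2 / k := by have := hz.1; positivity
  gcongr
  · linarith [hz.1]
  · linarith [hz.2]

end Weight

section Derivative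

variable (h : ℝ)

theorem sqrt_one_sub_four_sq_add_two_mul_sq : √(1 - 4 * h ^ 2 + (2 * h) ^ 2) = 1 := by
  rw [show 1 - 4 * h ^ 2 + (2 * h) ^ 2 = 1 by ring, sqrt_one]

theorem hasDerivAt_sqrt_one_sub_four_sq_add_sq :
    HasDerivAt (fun a => √(1 - 4 * h ^ 2 + a ^ 2)) (2 * h) (2 * h) := by
  have := ((hasDerivAt_pow 2 (2 * h)).const_add (1 - 4 * h ^ 2)).sqrt
    (by rw [show 1 - 4 * h ^ 2 + (2 * h) ^ 2 = 1 by ring]; exact one_ne_zero)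
  refine this.congr_deriv ?_
  rw [sqrt_one_sub_four_sq_add_two_mul_sq]
  ring

theorem phi_two_mul (hk : 1 - 4 * h ^ 2 ≠ 0) : phi h (2 * h) = 1 := by
  rw [phi, sqrt_one_sub_four_sq_add_two_mul_sq, div_eq_one_iff_eq hk]
  ring

theorem hasDerivAt_phi_two_mul : HasDerivAt (phi h) 0 (2 * h) := by
  have := ((((hasDerivAt_id' (2 * h)).const_mul (-2)).mul_const h).add
    (hasDerivAt_sqrt_one_sub_four_sq_add_sq h)).div_const (1 - 4 * h ^ 2)
  refine this.congr_deriv ?_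
  ring

theorem phi_sub_bb (a : ℝ) :
    phi h a - bb h a = 2 * √(1 - 4 * h ^ 2 + a ^ 2) / (1 - 4 * h ^ 2) := by
  rw [phi, bb]
  ring

theorem phi_sub_bb_two_mul : phi h (2 * h) - bb h (2 * h) = 2 / (1 - 4 * h ^ 2) := by
  rw [phi_sub_bb, sqrt_one_sub_four_sq_add_two_mul_sq, mul_one]

theorem hasDerivAt_phi_sub_bb_two_mul :
    HasDerivAt (fun a => phi h a - bb h a) (4 * h / (1 - 4 * h ^ 2)) (2 * h) := by
  simp only [phi_sub_bb]
  refine (((hasDerivAt_sqrt_one_sub_four_sq_add_sq h).const_mul 2).div_const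
    (1 - 4 * h ^ 2)).congr_deriv ?_
  ring

theorem hasDerivAt_sqrt_add_phi_sub_bb_two_mul {z : ℝ} (hw : 0 < z + 2 / (1 - 4 * h ^ 2)) :
    HasDerivAt (fun a => √(z + phi h a - bb h a))
      (4 * h / (1 - 4 * h ^ 2) / (2 * √(z + 2 / (1 - 4 * h ^ 2)))) (2 * h) := by
  have := ((hasDerivAt_phi_sub_bb_two_mul h).const_add z).sqrt
    (by rw [phi_sub_bb_two_mul]; exact hw.ne')
  rw [phi_sub_bb_two_mul] at this
  simpa only [← add_sub_assoc] using this

theorem hasDerivAt_sqrt_add_phi_sq_sub_one_two_mul {z : ℝ} (hk : 1 - 4 * h ^ 2 ≠ 0)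
    (hz : 0 < z) : HasDerivAt (fun a => √((z + phi h a) ^ 2 - 1)) 0 (2 * h) := by
  refine (((((hasDerivAt_phi_two_mul h).const_add z).fun_pow 2).sub_const 1).sqrt
    (by rw [phi_two_mul h hk]; nlinarith)).congr_deriv ?_
  simp

end Derivative

theorem hasDerivAt_utilde_two_mul {h z : ℝ} (hk : 0 < 1 - 4 * h ^ 2) (hz : 0 < z) :
    HasDerivAt (fun a => utilde h a z)
      (-(1 / z) * (√(z + 2) / ((1 - 4 * h ^ 2) * (z + 2 / (1 - 4 * h ^ 2)) ^ ((3 : ℝ) / 2))))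
      (2 * h) := by
  have hφ1 := phi_two_mul h hk.ne'
  have hw : 0 < z + 2 / (1 - 4 * h ^ 2) := by positivity
  have hN : HasDerivAt (fun a => -a + 2 * h * (z + phi h a)) (-1) (2 * h) := by
    refine ((hasDerivAt_neg' (2 * h)).add
      (((hasDerivAt_phi_two_mul h).const_add z).const_mul (2 * h))).congr_deriv ?_
    ring
  have hD : √z * √(z + phi h (2 * h) - bb h (2 * h)) * √((z + phi h (2 * h)) ^ 2 - 1) ≠ 0 := by
    rw [add_sub_assoc, phi_sub_bb_two_mul, hφ1]
    have : 0 < (z + 1) ^ 2 - 1 := by nlinarith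
    positivity
  refine (hN.div (((hasDerivAt_sqrt_add_phi_sub_bb_two_mul h hw).const_mul √z).mul
    (hasDerivAt_sqrt_add_phi_sq_sub_one_two_mul h hk.ne' hz)) hD).congr_deriv ?_
  simp only [Pi.mul_apply]
  rw [add_sub_assoc, phi_sub_bb_two_mul, hφ1,
    show (z + 1) ^ 2 - 1 = z * (z + 2) by ring, sqrt_mul hz.le,
    rpow_div_two_eq_sqrt _ hw.le, rpow_ofNat]
  have ha := sq_sqrt hz.le
  have hb := sq_sqrt hw.le
  have hc := sq_sqrt (by linarith : 0 ≤ z + 2)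
  have ha0 : 0 < √z := sqrt_pos.2 hz
  have hb0 : 0 < √(z + 2 / (1 - 4 * h ^ 2)) := sqrt_pos.2 hw
  have hc0 : 0 < √(z + 2) := sqrt_pos.2 (by linarith)
  have hrel : √(z + 2) ^ 2 =
      (1 - 4 * h ^ 2) * √(z + 2 / (1 - 4 * h ^ 2)) ^ 2 + 4 * h ^ 2 * √z ^ 2 := by
    rw [ha, hb, hc]
    field_simp
    ring
  generalize √(z + 2) = c at *
  generalize √(z + 2 / (1 - 4 * h ^ 2)) = b at *
  generalize 1 - 4 * h ^ 2 = k at *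
  generalize √z = a at *
  subst ha
  field_simp
  linear_combination a * c * hrel

/-- at α = 2h the derivative of α ↦ ũ_α^h(z) equals
−(1/z)·√(z + 2)/((1 − 4h²)·(z + 2/(1 − 4h²))^{3/2}), and this function of z is not
integrable near 0: its integral over (ε, 1) diverges to +∞ as ε → 0⁺. -/
theorem stmt_14 (h : ℝ) (hh : h ∈ Set.Ioo (0 : ℝ) (1 / 2)) :
    (∀ z : ℝ, 0 < z →
      deriv (fun a => utilde h a z) (2 * h) =
        -(1 / z) * (Real.sqrt (z + 2) /
          ((1 - 4 * h ^ 2) * (z + 2 / (1 - 4 * h ^ 2)) ^ ((3 : ℝ) / 2)))) ∧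
    ¬ MeasureTheory.IntegrableOn
        (fun z => 1 / z * (Real.sqrt (z + 2) /
          ((1 - 4 * h ^ 2) * (z + 2 / (1 - 4 * h ^ 2)) ^ ((3 : ℝ) / 2))))
        (Set.Ioo 0 1) ∧
    Filter.Tendsto
      (fun ε => ∫ z in ε..1, 1 / z * (Real.sqrt (z + 2) /
        ((1 - 4 * h ^ 2) * (z + 2 / (1 - 4 * h ^ 2)) ^ ((3 : ℝ) / 2))))
      (nhdsWithin 0 (Set.Ioi 0)) Filter.atTop := by
  have hk : 0 < 1 - 4 * h ^ 2 := by nlinarith [hh.1, hh.2]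
  have hm : 0 < √2 / ((1 - 4 * h ^ 2) * (1 + 2 / (1 - 4 * h ^ 2)) ^ ((3 : ℝ) / 2)) := by
    positivity
  have hle := fun z (hz : z ∈ Icc (0 : ℝ) 1) => sqrt_two_div_le_sqrt_add_two_div_mul_rpow hk hz
  refine ⟨fun z hz => (hasDerivAt_utilde_two_mul hk hz).deriv,
    not_integrableOn_Ioo_one_div_mul_of_le hm one_pos fun z hz => hle z (Ioo_subset_Icc_self hz),
    tendsto_intervalIntegral_one_div_mul_of_le hm one_pos
      ((continuousOn_sqrt_add_two_div_mul_rpow hk).mono Ioc_subset_Ioi_self)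
      fun z hz => hle z (Ioc_subset_Icc_self hz)⟩
end
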